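/- arXiv:1710.08888 — 4 statements merged into one kernel-verified Lean document; each statement's English description precedes it below -/
import Mathlib

section
/- Let R be a commutative ring with a derivation d, and let C₀, Cᵢ be r×r matrices over R satisfying [C₀, Cᵢ] = d(C₀) (with d acting entrywise). Then for every natural number j, d(trace(C₀^j)) = 0. -/
/-- If `d : R → R` is a derivation on a commutative ring `R`, extended
entrywise to matrices, and the `r × r` matrices `C₀, Cᵢ` satisfy `[C₀, Cᵢ] = d(C₀)`,
then `d(trace(C₀ ^ j)) = 0` for every natural number `j`. -/
theorem stmt1 {R : Type*} [CommRing R] {r : ℕ}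
    (d : R → R)
    (hd_add : ∀ a b : R, d (a + b) = d a + d b)
    (hd_mul : ∀ a b : R, d (a * b) = d a * b + a * d b)
    (C₀ Cᵢ : Matrix (Fin r) (Fin r) R)
    (hcomm : C₀ * Cᵢ - Cᵢ * C₀ = C₀.map d) :
    ∀ j : ℕ, d (Matrix.trace (C₀ ^ j)) = 0 := by
  set D : R →+ R := AddMonoidHom.mk' d hd_add with hD
  have hd0 : d 0 = 0 := D.map_zero
  have hd1 : d 1 = 0 := by
    have := hd_mul 1 1
    simp at this
    exact this
  -- Leibniz rule for entrywise d on matrix products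
  have hmap_mul : ∀ A B : Matrix (Fin r) (Fin r) R,
      (A * B).map d = A.map d * B + A * B.map d := by
    intro A B
    ext i k
    simp only [Matrix.map_apply, Matrix.mul_apply, Matrix.add_apply]
    rw [show d (∑ x, A i x * B x k) = D (∑ x, A i x * B x k) from rfl,
      map_sum, ← Finset.sum_add_distrib]
    exact Finset.sum_congr rfl fun x _ => hd_mul _ _
  -- key: (C₀^j).map d = C₀^j * Cᵢ - Cᵢ * C₀^j
  have key : ∀ j : ℕ, (C₀ ^ j).map d = C₀ ^ j * Cᵢ - Cᵢ * C₀ ^ j := by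
    intro j
    induction j with
    | zero =>
      ext i k
      simp [Matrix.map_apply, Matrix.one_apply, apply_ite d, hd0, hd1]
    | succ n ih =>
      rw [pow_succ, hmap_mul, ih, ← hcomm]
      noncomm_ring
  intro j
  have htr : d (Matrix.trace (C₀ ^ j)) = Matrix.trace ((C₀ ^ j).map d) := by
    unfold Matrix.trace
    rw [show d (∑ i, (C₀ ^ j).diag i) = D (∑ i, (C₀ ^ j).diag i) from rfl, map_sum]
    rfl
  rw [htr, key, Matrix.trace_sub, Matrix.trace_mul_comm, sub_self]
end

section
/- Let K be a field of characteristic zero with a derivation d, and let C be an r×r matrix over K such that d(trace(C^j)) = 0 for all j ≥ 1. If α is an eigenvalue of C lying in K and d extends to the algebraic closure, then every eigenvalue of C (in an algebraically closed extension with the extended derivation) is killed by the extended derivation. -/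
/-!
Over the algebraically closed field `L`, `trace (C ^ j)` is the power sum `∑ β ^ j` over the
eigenvalues `β` of `C`, counted with multiplicity. Applying `D` gives
`j * ∑ β ^ (j - 1) * D β = 0`, and in characteristic zero we may cancel `j`. Grouping equal
eigenvalues, the distinct eigenvalues `μ` satisfy `∑ μ ^ i * (m_μ * D μ) = 0` for all `i`, so by
invertibility of the Vandermonde system each `m_μ * D μ`, hence each `D μ`, vanishes.
-/

open Polynomial

theorem Commute.isNilpotent_pow_sub_pow {R : Type*} [Ring R] {x y : R} (h : Commute x y)
    (hxy : IsNilpotent (x - y)) (n : ℕ) : IsNilpotent (x ^ n - y ^ n) := by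
  rw [← h.geom_sum₂_mul]
  refine Commute.isNilpotent_mul_left (Commute.sum_left _ _ _ fun i _ ↦ ?_) hxy
  exact (((Commute.refl x).pow_left i).sub_right (h.pow_left i)).mul_left
    ((h.symm.pow_left _).sub_right ((Commute.refl y).pow_left _))

theorem Finset.eq_zero_of_forall_sum_pow_mul_eq_zero {F : Type*} [Field F] {t : Finset F}
    {w : F → F} (h : ∀ i : ℕ, ∑ x ∈ t, x ^ i * w x = 0) {x : F} (hx : x ∈ t) : w x = 0 := by
  classical
  have heval : ∀ p : F[X], ∑ y ∈ t, p.eval y * w y = 0 := fun p ↦ by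
    simp_rw [eval_eq_sum_range, Finset.sum_mul, mul_assoc]
    rw [Finset.sum_comm]
    exact Finset.sum_eq_zero fun i _ ↦ by rw [← Finset.mul_sum, h, mul_zero]
  -- the Lagrange basis polynomial at `x` picks out the single term `w x`
  have := heval (Lagrange.basis t id x)
  rwa [Finset.sum_eq_single_of_mem x hx fun y hy hyx ↦ by
      rw [show eval y _ = 0 from Lagrange.eval_basis_of_ne (v := id) hyx.symm hy, zero_mul],
    show eval x _ = 1 from Lagrange.eval_basis_self (Set.injOn_id _) hx, one_mul] at this

theorem Multiset.eq_zero_of_forall_sum_map_pow_mul_eq_zero {F : Type*} [Field F] [CharZero F]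
    {s : Multiset F} {c : F → F} (h : ∀ i : ℕ, (s.map fun x ↦ x ^ i * c x).sum = 0) {x : F}
    (hx : x ∈ s) : c x = 0 := by
  classical
  have hcount : s.count x * c x = 0 := by
    refine Finset.eq_zero_of_forall_sum_pow_mul_eq_zero (w := fun y ↦ s.count y * c y)
      (fun i ↦ ?_) (mem_toFinset.mpr hx)
    rw [← h i, Finset.sum_multiset_map_count]
    exact Finset.sum_congr rfl fun y _ ↦ by rw [nsmul_eq_mul]; ring
  exact (mul_eq_zero.mp hcount).resolve_left (Nat.cast_ne_zero.mpr (count_ne_zero.mpr hx))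

namespace Module.End

variable {K V : Type*} [Field K] [AddCommGroup V] [Module K V] [FiniteDimensional K V]

lemma trace_pow_restrict_maxGenEigenspace (f : End K V) (μ : K) (j : ℕ) :
    LinearMap.trace K (f.maxGenEigenspace μ)
        (f.restrict (mapsTo_maxGenEigenspace_of_comm (Commute.refl f) μ) ^ j) =
      finrank K (f.maxGenEigenspace μ) * μ ^ j := by
  set g := f.restrict (mapsTo_maxGenEigenspace_of_comm (Commute.refl f) μ)
  have hg : IsNilpotent (g - algebraMap K _ μ) :=
    f.isNilpotent_restrict_maxGenEigenspace_sub_algebraMap μ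
  have := (LinearMap.isNilpotent_trace_of_isNilpotent
    ((Algebra.commute_algebraMap_right μ g).isNilpotent_pow_sub_pow hg j)).eq_zero
  rw [← map_pow, map_sub, sub_eq_zero, Module.algebraMap_end_eq_smul_id, map_smul,
    LinearMap.trace_id, smul_eq_mul] at this
  rw [this, mul_comm]

lemma mem_roots_charpoly_iff_maxGenEigenspace_ne_bot (f : End K V) (μ : K) :
    μ ∈ f.charpoly.roots ↔ f.maxGenEigenspace μ ≠ ⊥ := by
  classical
  rw [← Multiset.count_pos, count_roots, ← LinearMap.finrank_maxGenEigenspace_eq,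
    Nat.pos_iff_ne_zero, Ne, Submodule.finrank_eq_zero]

lemma trace_pow_eq_sum_roots_charpoly [IsAlgClosed K] (f : End K V) (j : ℕ) :
    LinearMap.trace K V (f ^ j) = (f.charpoly.roots.map (· ^ j)).sum := by
  classical
  have hfin : {μ | f.maxGenEigenspace μ ≠ ⊥}.Finite :=
    WellFoundedGT.finite_ne_bot_of_iSupIndep f.independent_maxGenEigenspace
  have hint : DirectSum.IsInternal f.maxGenEigenspace :=
    DirectSum.isInternal_submodule_of_iSupIndep_of_iSup_eq_top f.independent_maxGenEigenspace
      f.iSup_maxGenEigenspace_eq_top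
  have hroots : hfin.toFinset = f.charpoly.roots.toFinset := by
    ext μ
    rw [Set.Finite.mem_toFinset, Multiset.mem_toFinset,
      mem_roots_charpoly_iff_maxGenEigenspace_ne_bot]
    rfl
  rw [LinearMap.trace_eq_sum_trace_restrict' hint hfin
      fun μ ↦ mapsTo_maxGenEigenspace_of_comm ((Commute.refl f).pow_right j) μ,
    Finset.sum_multiset_map_count, hroots]
  refine Finset.sum_congr rfl fun μ _ ↦ ?_
  rw [← pow_restrict _ (mapsTo_maxGenEigenspace_of_comm (Commute.refl f) μ),
    trace_pow_restrict_maxGenEigenspace, LinearMap.finrank_maxGenEigenspace_eq,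
    count_roots, nsmul_eq_mul]

end Module.End

theorem Matrix.trace_pow_eq_sum_roots_charpoly {K n : Type*} [Field K] [IsAlgClosed K]
    [Fintype n] [DecidableEq n] (A : Matrix n n K) (j : ℕ) :
    (A ^ j).trace = (A.charpoly.roots.map (· ^ j)).sum := by
  rw [← Matrix.trace_toLin'_eq, Matrix.toLin'_pow, Module.End.trace_pow_eq_sum_roots_charpoly,
    Matrix.charpoly_toLin']

def Derivation.ofAddMul {A : Type*} [CommRing A] (D : A → A)
    (hadd : ∀ a b, D (a + b) = D a + D b) (hmul : ∀ a b, D (a * b) = D a * b + a * D b) :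
    Derivation ℤ A A :=
  Derivation.mk' (AddMonoidHom.mk' D hadd).toIntLinearMap fun a b ↦ by
    simp only [AddMonoidHom.coe_toIntLinearMap, AddMonoidHom.mk'_apply, hmul, smul_eq_mul]
    ring

theorem Derivation.map_sum_map_pow_succ {R A : Type*} [CommSemiring R] [CommRing A]
    [Algebra R A] (δ : Derivation R A A) (s : Multiset A) (n : ℕ) :
    δ (s.map (· ^ (n + 1))).sum = (n + 1) * (s.map fun x ↦ x ^ n * δ x).sum := by
  rw [map_multiset_sum, Multiset.map_map, Multiset.sum_map_mul_left.symm]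
  congr 1
  refine Multiset.map_congr rfl fun x _ ↦ ?_
  simp only [Function.comp_apply, leibniz_pow, add_tsub_cancel_right, smul_eq_mul, nsmul_eq_mul,
    Nat.cast_add, Nat.cast_one]

theorem stmt2_general {K L : Type*} [Field K] [CharZero K] [Field L] [Algebra K L]
    [IsAlgClosed L] {r : ℕ}
    (d : K → K)
    (D : L → L)
    (hD_add : ∀ a b : L, D (a + b) = D a + D b)
    (hD_mul : ∀ a b : L, D (a * b) = D a * b + a * D b)
    (hD_ext : ∀ a : K, D (algebraMap K L a) = algebraMap K L (d a))
    (C : Matrix (Fin r) (Fin r) K)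
    (htr : ∀ j : ℕ, 1 ≤ j → d (Matrix.trace (C ^ j)) = 0) :
    ∀ β : L, ((C.map (algebraMap K L)).charpoly).IsRoot β → D β = 0 := by
  intro β hβ
  have : CharZero L := charZero_of_injective_algebraMap (algebraMap K L).injective
  set δ := Derivation.ofAddMul D hD_add hD_mul
  set eigs := (C.map (algebraMap K L)).charpoly.roots
  have hpowSum : ∀ n : ℕ, δ (eigs.map (· ^ (n + 1))).sum = 0 := fun n ↦ by
    rw [← Matrix.trace_pow_eq_sum_roots_charpoly, ← Matrix.map_pow, ← AddMonoidHom.map_trace]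
    exact (hD_ext _).trans (by rw [htr _ n.succ_pos, map_zero])
  have hweighted : ∀ n : ℕ, (eigs.map fun x ↦ x ^ n * D x).sum = 0 := fun n ↦ by
    have := δ.map_sum_map_pow_succ eigs n
    rw [hpowSum] at this
    exact (mul_eq_zero.mp this.symm).resolve_left (Nat.cast_add_one_ne_zero n)
  exact Multiset.eq_zero_of_forall_sum_map_pow_mul_eq_zero hweighted
    ((mem_roots (Matrix.charpoly_monic _).ne_zero).mpr hβ)

/-- Let `K` be a field of characteristic zero with a derivation `d`, and
`C` an `r × r` matrix over `K` with `d(trace(C ^ j)) = 0` for all `j ≥ 1`.  If `α` is an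
eigenvalue of `C` lying in `K`, and `D` is the (unique) extension of the derivation `d`
to an algebraically closed algebraic extension `L` of `K`, then every eigenvalue of `C`
in `L` (i.e. every root of the characteristic polynomial of `C` over `L`) is killed
by `D`. -/
theorem stmt2 {K L : Type*} [Field K] [CharZero K] [Field L] [Algebra K L]
    [IsAlgClosed L] [Algebra.IsAlgebraic K L] {r : ℕ}
    (d : K → K)
    (hd_add : ∀ a b : K, d (a + b) = d a + d b)
    (hd_mul : ∀ a b : K, d (a * b) = d a * b + a * d b)
    (D : L → L)
    (hD_add : ∀ a b : L, D (a + b) = D a + D b)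
    (hD_mul : ∀ a b : L, D (a * b) = D a * b + a * D b)
    (hD_ext : ∀ a : K, D (algebraMap K L a) = algebraMap K L (d a))
    (C : Matrix (Fin r) (Fin r) K)
    (htr : ∀ j : ℕ, 1 ≤ j → d (Matrix.trace (C ^ j)) = 0)
    (hα : ∃ α : K, (Matrix.charpoly C).IsRoot α) :
    ∀ β : L, ((C.map (algebraMap K L)).charpoly).IsRoot β → D β = 0 :=
  stmt2_general d D hD_add hD_mul hD_ext C htr
end

section
/- Let A_∞ be a ring with a group Γ acting by ring automorphisms, and let A ⊆ A_∞^Γ be a subring such that for every prime p of A, Γ acts transitively on the primes of A_∞ lying above p. If C is a Γ-equivariant A_∞-algebra that is flat over A_∞ and faithfully flat over A, then Spec C → Spec A_∞ is surjective. -/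
open scoped TensorProduct

/-- For a faithfully flat algebra, the contraction of the extension of a prime is itself. -/
lemma ff_comap_map_eq {A C : Type*} [CommRing A] [CommRing C] [Algebra A C]
    [Module.FaithfullyFlat A C] {p : Ideal A} (hp : p.IsPrime) :
    (p.map (algebraMap A C)).comap (algebraMap A C) = p := by
  refine le_antisymm ?_ Ideal.le_comap_map
  intro a ha
  by_contra hnp
  set f := algebraMap A C with hf
  -- multiplication by `a` on `A ⧸ p` is injective
  have hinj : Function.Injective (LinearMap.lsmul A (A ⧸ p) a) := by
    rw [← LinearMap.ker_eq_bot, eq_bot_iff]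
    rintro x hx
    obtain ⟨b, rfl⟩ := Submodule.Quotient.mk_surjective p x
    have h0 : a • (Submodule.Quotient.mk b : A ⧸ p) = 0 := hx
    rw [← Submodule.Quotient.mk_smul, Submodule.Quotient.mk_eq_zero, smul_eq_mul] at h0
    rw [Submodule.mem_bot, Submodule.Quotient.mk_eq_zero]
    exact (hp.mem_or_mem h0).resolve_left hnp
  -- in `(A⧸p) ⊗ C`, any tensor `x ⊗ (z * c)` with `z ∈ pC` vanishes
  have key : ∀ z ∈ p.map f, ∀ (c : C) (x : A ⧸ p),
      (x ⊗ₜ[A] (z * c) : (A ⧸ p) ⊗[A] C) = 0 := by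
    intro z hz
    refine Submodule.span_induction ?_ ?_ ?_ ?_ hz
    · rintro _ ⟨b, hb, rfl⟩ c x
      obtain ⟨y, rfl⟩ := Submodule.Quotient.mk_surjective p x
      have hbc : f b * c = b • c := (Algebra.smul_def b c).symm
      rw [hbc, ← TensorProduct.smul_tmul, ← Submodule.Quotient.mk_smul,
        smul_eq_mul, show (Submodule.Quotient.mk (b * y) : A ⧸ p) = 0 from
          (Submodule.Quotient.mk_eq_zero _).2 (p.mul_mem_right y hb),
        TensorProduct.zero_tmul]
    · intro c x; rw [zero_mul, TensorProduct.tmul_zero]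
    · intro z w _ _ hzc hwc c x
      rw [add_mul, TensorProduct.tmul_add, hzc, hwc, add_zero]
    · intro d z _ hzc c x
      rw [smul_eq_mul, mul_comm d z, mul_assoc]
      exact hzc (d * c) x
  -- hence `lsmul a` tensored with `C` is zero
  have hzero : LinearMap.rTensor C (LinearMap.lsmul A (A ⧸ p) a) = 0 := by
    apply TensorProduct.ext'
    intro x c
    have : (LinearMap.lsmul A (A ⧸ p) a) x ⊗ₜ[A] c = x ⊗ₜ[A] (f a * c) := by
      rw [LinearMap.lsmul_apply, TensorProduct.smul_tmul, Algebra.smul_def]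
    rw [LinearMap.rTensor_tmul, this, LinearMap.zero_apply]
    exact key (f a) ha c x
  have hS : Subsingleton ((A ⧸ p) ⊗[A] C) := by
    have := Module.Flat.rTensor_preserves_injective_linearMap
      (M := C) (LinearMap.lsmul A (A ⧸ p) a) hinj
    rw [hzero] at this
    refine subsingleton_iff_forall_eq 0 |>.2 fun y => this ?_
    simp
  have : Subsingleton (A ⧸ p) := Module.FaithfullyFlat.rTensor_reflects_triviality A C (A ⧸ p)
  have hnt : Nontrivial (A ⧸ p) := Ideal.Quotient.nontrivial_iff.mpr hp.ne_top
  exact not_subsingleton_iff_nontrivial.2 hnt this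

/-- Lying over for faithfully flat algebras. -/
lemma ff_lying_over {A C : Type*} [CommRing A] [CommRing C] [Algebra A C]
    [Module.FaithfullyFlat A C] {p : Ideal A} (hp : p.IsPrime) :
    ∃ q : Ideal C, q.IsPrime ∧ q.comap (algebraMap A C) = p := by
  set f := algebraMap A C
  set S : Submonoid C := Submonoid.map f p.primeCompl
  have hdisj : Disjoint ((p.map f : Ideal C) : Set C) (S : Set C) := by
    rw [Set.disjoint_left]
    rintro z hz ⟨b, hb, rfl⟩
    exact hb (ff_comap_map_eq (C := C) hp ▸ hz)
  obtain ⟨q, hq, hle, hqd⟩ := Ideal.exists_le_prime_disjoint _ S hdisj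
  refine ⟨q, hq, le_antisymm ?_ (Ideal.le_comap_map.trans (Ideal.comap_mono hle))⟩
  intro a haq
  by_contra hnp
  exact Set.disjoint_left.1 hqd haq ⟨a, hnp, rfl⟩


set_option maxHeartbeats 1000000 in
/-- Let `Γ` be a group acting by ring automorphisms on `Ainf`, fixing a
subring `A` (via `algebraMap A Ainf`), such that for every prime of `A` the group `Γ`
acts transitively on the primes of `Ainf` lying over it.  Let `C` be an `Ainf`-algebra,
with a compatible `Γ`-action, which is flat over `Ainf` and faithfully flat over `A`.
Then `C` is faithfully flat over `Ainf` (equivalently, `Spec C → Spec Ainf` is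
surjective, since no `Γ`-conjugate of a prime outside the image can lie in the image
while its contraction to `A` does). -/
theorem stmt8 {A Ainf C : Type*} [CommRing A] [CommRing Ainf] [CommRing C]
    [Algebra A Ainf] [Algebra Ainf C] [Algebra A C] [IsScalarTower A Ainf C]
    {Γ : Type*} [Group Γ] [MulSemiringAction Γ Ainf] [MulSemiringAction Γ C]
    -- the action fixes `A`
    (hfix : ∀ (γ : Γ) (a : A), γ • (algebraMap A Ainf a) = algebraMap A Ainf a)
    -- the structure map `Ainf → C` is `Γ`-equivariant
    (hequiv : ∀ (γ : Γ) (x : Ainf), algebraMap Ainf C (γ • x) = γ • (algebraMap Ainf C x))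
    -- `Γ` acts transitively on the primes of `Ainf` above a given prime of `A`
    (htrans : ∀ P Q : Ideal Ainf, P.IsPrime → Q.IsPrime →
      P.comap (algebraMap A Ainf) = Q.comap (algebraMap A Ainf) →
      ∃ γ : Γ, Q = P.comap (MulSemiringAction.toRingHom Γ Ainf γ))
    -- `C` is flat over `Ainf`
    [Module.Flat Ainf C]
    -- `C` is faithfully flat over `A`
    [Module.FaithfullyFlat A C] :
    Module.FaithfullyFlat Ainf C := by
  rw [Module.FaithfullyFlat.iff_flat_and_proper_ideal]
  refine ⟨inferInstance, fun I hI hIC => ?_⟩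
  obtain ⟨m, hm, hle⟩ := I.exists_le_maximal hI
  have hmp : m.IsPrime := hm.isPrime
  haveI := hmp
  -- the contraction of `m` to `A`
  have hpp : (m.comap (algebraMap A Ainf)).IsPrime := Ideal.IsPrime.comap _
  obtain ⟨q, hq, hqp⟩ := ff_lying_over (C := C) hpp
  haveI := hq
  set Q : Ideal Ainf := q.comap (algebraMap Ainf C) with hQdef
  have hQ : Q.IsPrime := Ideal.IsPrime.comap _
  have hcomap : m.comap (algebraMap A Ainf) = Q.comap (algebraMap A Ainf) := by
    rw [hQdef, Ideal.comap_comap, ← IsScalarTower.algebraMap_eq, hqp]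
  obtain ⟨γ, hγ⟩ := htrans m Q hmp hQ hcomap
  -- hence `m = Q.comap σ_{γ⁻¹}`
  have hmQ : m = Q.comap (MulSemiringAction.toRingHom Γ Ainf γ⁻¹) := by
    ext x
    rw [Ideal.mem_comap, hγ, Ideal.mem_comap]
    simp only [MulSemiringAction.toRingHom_apply, smul_inv_smul]
  -- rewrite as contraction of a prime of `C`
  have hcomp : (algebraMap Ainf C).comp (MulSemiringAction.toRingHom Γ Ainf γ⁻¹)
      = (MulSemiringAction.toRingHom Γ C γ⁻¹).comp (algebraMap Ainf C) := by
    ext x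
    simp only [RingHom.comp_apply, MulSemiringAction.toRingHom_apply]
    exact hequiv γ⁻¹ x
  have hm_eq : m = (q.comap (MulSemiringAction.toRingHom Γ C γ⁻¹)).comap (algebraMap Ainf C) := by
    rw [hmQ, hQdef, Ideal.comap_comap, hcomp, ← Ideal.comap_comap]
  set q' : Ideal C := q.comap (MulSemiringAction.toRingHom Γ C γ⁻¹) with hq'def
  have hq' : q'.IsPrime := Ideal.IsPrime.comap _
  have hmap : m.map (algebraMap Ainf C) ≤ q' := Ideal.map_le_iff_le_comap.2 (le_of_eq hm_eq)
  have h1 : (1 : C) ∈ I.map (algebraMap Ainf C) := by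
    have h1' : (1 : C) ∈ I • (⊤ : Submodule Ainf C) := by rw [hIC]; exact Submodule.mem_top
    rwa [Ideal.smul_top_eq_map, Submodule.restrictScalars_mem] at h1'
  exact hq'.ne_top (Ideal.eq_top_iff_one _ |>.2 (hmap (Ideal.map_mono hle h1)))
end

section
/- Let Γ be a topological group with a continuous character χ : Γ → Z_p^×, acting continuously and semilinearly on an abelian topological group W, and let γ ∈ Γ. Suppose ϑ is an endomorphism of W such that γ∘ϑ = χ(γ)·ϑ∘γ for all γ ∈ Γ, and suppose φ(w) = lim_{j→∞} (γ^{p^j}w - w)/(p^j · log χ(γ)) exists for all w ∈ W and defines an additive endomorphism φ. Then φ∘ϑ - ϑ∘φ = ϑ. -/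
open Filter Topology

/-! Writing `t = γ^{p^j} w`, `c = χ(γ)^{p^j}` and `ε = (p^j log χ(γ))⁻¹`, semilinearity gives
`ε (γ^{p^j} ϑw - ϑw) = (ε (c - 1)) ϑt + ϑ(ε (t - w))`. As `j → ∞` the scalar tends to `1` and
`t → w`, so the first term tends to `ϑw`, while the second tends to `ϑ(φw)` by continuity of `ϑ`.
Hence `φ(ϑw) = ϑw + ϑ(φw)`. -/

theorem tendsto_smul_smul_map_sub {R W ι : Type*} [CommRing R] [TopologicalSpace R]
    [AddCommGroup W] [Module R W] [TopologicalSpace W] [ContinuousAdd W] [ContinuousSMul R W]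
    (ϑ : W →L[R] W) {l : Filter ι} {c ε : ι → R} {t : ι → W} {w v : W}
    (hcε : Tendsto (fun i => (c i - 1) * ε i) l (𝓝 1)) (ht : Tendsto t l (𝓝 w))
    (hv : Tendsto (fun i => ε i • (t i - w)) l (𝓝 v)) :
    Tendsto (fun i => ε i • (c i • ϑ (t i) - ϑ w)) l (𝓝 (ϑ w + ϑ v)) := by
  have hfirst : Tendsto (fun i => ((c i - 1) * ε i) • ϑ (t i)) l (𝓝 (ϑ w)) := by
    simpa using hcε.smul ((ϑ.continuous.tendsto w).comp ht)
  have hsecond : Tendsto (fun i => ϑ (ε i • (t i - w))) l (𝓝 (ϑ v)) :=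
    (ϑ.continuous.tendsto v).comp hv
  refine (hfirst.add hsecond).congr fun i => ?_
  rw [map_smul, map_sub, mul_comm, mul_smul]
  module

theorem tendsto_mul_inv_const_mul {K : Type*} [Field K] [TopologicalSpace K] [ContinuousMul K]
    {x y : ℕ → K} {L : K} (hL0 : L ≠ 0) (hL : Tendsto (fun j => x j / y j) atTop (𝓝 L)) :
    Tendsto (fun j => x j * (L * y j)⁻¹) atTop (𝓝 1) := by
  have h := hL.div_const L
  rw [div_self hL0] at h
  refine h.congr fun j => ?_
  rw [div_div, div_eq_mul_inv, mul_comm (y j)]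

theorem stmt15_general (p : ℕ) [Fact p.Prime]
    {W : Type*} [AddCommGroup W] [Module ℚ_[p] W]
    [TopologicalSpace W] [IsTopologicalAddGroup W] [ContinuousSMul ℚ_[p] W] [T2Space W]
    {Γ : Type*} [Group Γ] [DistribMulAction Γ W]
    (χ : Γ →* ℤ_[p]ˣ)
    -- the action is `χ`-semilinear against `ϑ` : `g • ϑ(w) = χ(g) • ϑ(g • w)`
    (ϑ : W →L[ℚ_[p]] W)
    (hsemi : ∀ (g : Γ) (w : W),
      g • (ϑ w) = (((χ g : ℤ_[p]) : ℚ_[p])) • ϑ (g • w))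
    (γ : Γ) (L : ℚ_[p]) (hL0 : L ≠ 0)
    -- `L = log χ(γ)`, characterized as the limit of `(χ(γ)^{p^j} - 1)/p^j`
    (hL : Tendsto (fun j : ℕ =>
        ((((χ γ : ℤ_[p]) : ℚ_[p])) ^ (p ^ j) - 1) / (p : ℚ_[p]) ^ j) atTop (𝓝 L))
    -- the action of `γ^{p^j}` converges to the identity pointwise (continuity)
    (hact : ∀ w : W, Tendsto (fun j : ℕ => (γ ^ (p ^ j)) • w) atTop (𝓝 w))
    (φ : W → W)
    -- `φ(w) = lim (γ^{p^j} • w - w) / (p^j · L)`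
    (hφ : ∀ w : W, Tendsto (fun j : ℕ =>
        (L * (p : ℚ_[p]) ^ j)⁻¹ • ((γ ^ (p ^ j)) • w - w)) atTop (𝓝 (φ w))) :
    ∀ w : W, φ (ϑ w) - ϑ (φ w) = ϑ w := by
  intro w
  have hsemi_pow : ∀ j : ℕ, γ ^ (p ^ j) • ϑ w =
      (((χ γ : ℤ_[p]) : ℚ_[p])) ^ (p ^ j) • ϑ (γ ^ (p ^ j) • w) := fun j => by
    simpa using hsemi (γ ^ (p ^ j)) w
  have hlim := tendsto_smul_smul_map_sub ϑ (tendsto_mul_inv_const_mul hL0 hL) (hact w) (hφ w)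
  rw [tendsto_nhds_unique (hφ (ϑ w)) (hlim.congr fun j => by rw [hsemi_pow])]
  abel

/-- Let `Γ` be a group with a character `χ : Γ → ℤ_p^×`, acting
continuously on a topological `ℚ_p`-vector space `W`, and let `γ ∈ Γ` with
`L = log χ(γ) ≠ 0` (characterized by `L = lim (χ(γ)^{p^j} - 1)/p^j`).  Suppose `ϑ` is a
continuous endomorphism of `W` with `g ∘ ϑ = χ(g)·ϑ ∘ g` for all `g ∈ Γ`, and that
`φ(w) = lim_{j→∞} (γ^{p^j} w - w)/(p^j · L)` exists for all `w` and defines an additive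
endomorphism `φ`.  Then `φ ∘ ϑ - ϑ ∘ φ = ϑ`. -/
theorem stmt15 (p : ℕ) [Fact p.Prime]
    {W : Type*} [AddCommGroup W] [Module ℚ_[p] W]
    [TopologicalSpace W] [IsTopologicalAddGroup W] [ContinuousSMul ℚ_[p] W] [T2Space W]
    {Γ : Type*} [Group Γ] [DistribMulAction Γ W]
    (χ : Γ →* ℤ_[p]ˣ)
    -- the action is `χ`-semilinear against `ϑ` : `g • ϑ(w) = χ(g) • ϑ(g • w)`
    (ϑ : W →L[ℚ_[p]] W)
    (hsemi : ∀ (g : Γ) (w : W),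
      g • (ϑ w) = (((χ g : ℤ_[p]) : ℚ_[p])) • ϑ (g • w))
    (γ : Γ) (L : ℚ_[p]) (hL0 : L ≠ 0)
    -- `L = log χ(γ)`, characterized as the limit of `(χ(γ)^{p^j} - 1)/p^j`
    (hL : Tendsto (fun j : ℕ =>
        ((((χ γ : ℤ_[p]) : ℚ_[p])) ^ (p ^ j) - 1) / (p : ℚ_[p]) ^ j) atTop (𝓝 L))
    -- the action of `γ^{p^j}` converges to the identity pointwise (continuity)
    (hact : ∀ w : W, Tendsto (fun j : ℕ => (γ ^ (p ^ j)) • w) atTop (𝓝 w))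
    (φ : W → W)
    (hφ_add : ∀ w w' : W, φ (w + w') = φ w + φ w')
    -- `φ(w) = lim (γ^{p^j} • w - w) / (p^j · L)`
    (hφ : ∀ w : W, Tendsto (fun j : ℕ =>
        (L * (p : ℚ_[p]) ^ j)⁻¹ • ((γ ^ (p ^ j)) • w - w)) atTop (𝓝 (φ w))) :
    ∀ w : W, φ (ϑ w) - ϑ (φ w) = ϑ w :=
  stmt15_general p χ ϑ hsemi γ L hL0 hL hact φ hφ
end
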